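/- (Relative isoperimetric inequality) There are constants C = C(T) and λ = λ(T) ≥ 1, depending only on the data of T, such that min{ μ(B ∩ U⁺)/μ(B), μ(B ∩ U⁻)/μ(B) } ≤ C (r/μ(λB)) H(S ∩ λB) for all balls B = B(x, r) for which λB ⊂ π φ̃^{−1}(−1/4, 1/4). -/

import Mathlib

open MeasureTheory Metric Set Filter Topology
open scoped ENNReal NNReal unitInterval

noncomputable section

namespace Duality

/-! ### Rectifiable curves, line integrals and upper gradients

A rectifiable path is encoded by its arclength-type parametrization: a `1`-Lipschitz
map defined on a compact interval `[a, b]`.  The line integral `∫_γ ρ ds` of a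
nonnegative Borel function is then the Lebesgue integral of `ρ ∘ γ` over `[a, b]`. -/

structure UPath (X : Type*) [PseudoMetricSpace X] where
  a : ℝ
  b : ℝ
  hab : a ≤ b
  toFun : ℝ → X
  lip : LipschitzOnWith 1 toFun (Set.Icc a b)

namespace UPath

variable {X : Type*} [PseudoMetricSpace X]

/-- starting point of the path -/
def start (γ : UPath X) : X := γ.toFun γ.a

/-- end point of the path -/
def finish (γ : UPath X) : X := γ.toFun γ.b

/-- The line integral `∫_γ ρ ds`. -/
def integral (γ : UPath X) (ρ : X → ℝ≥0∞) : ℝ≥0∞ :=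
  ∫⁻ t in Set.Icc γ.a γ.b, ρ (γ.toFun t)

/-- The image (trace) `|γ|` of the path. -/
def trace (γ : UPath X) : Set X := γ.toFun '' Set.Icc γ.a γ.b

/-- The length of the path. -/
def length (γ : UPath X) : ℝ≥0∞ := eVariationOn γ.toFun (Set.Icc γ.a γ.b)

/-- The path stays inside the set `W`. -/
def InSet (γ : UPath X) (W : Set X) : Prop := ∀ t ∈ Set.Icc γ.a γ.b, γ.toFun t ∈ W

/-- The reparametrization of a rectifiable path as a `Path` (continuous map from `[0,1]`). -/
def toPath (γ : UPath X) : Path γ.start γ.finish where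
  toFun := fun t => γ.toFun (γ.a + (t : ℝ) * (γ.b - γ.a))
  continuous_toFun := by
    have hmem : ∀ t : unitInterval, γ.a + (t : ℝ) * (γ.b - γ.a) ∈ Set.Icc γ.a γ.b := by
      intro t
      obtain ⟨ht0, ht1⟩ := t.2
      constructor
      · nlinarith [γ.hab]
      · nlinarith [γ.hab]
    exact γ.lip.continuousOn.comp_continuous (by continuity) hmem
  source' := by simp [start]
  target' := by simp [finish]

end UPath

/-- `ρ` is an upper gradient of `u`. -/
def IsUpperGradient {X : Type*} [PseudoMetricSpace X] {Y : Type*} [PseudoEMetricSpace Y]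
    (u : X → Y) (ρ : X → ℝ≥0∞) : Prop :=
  ∀ γ : UPath X, edist (u γ.start) (u γ.finish) ≤ γ.integral ρ

/-- The `p`-modulus of a family of (rectifiable) paths. -/
def pathMod {X : Type*} [PseudoMetricSpace X] [MeasurableSpace X]
    (μ : Measure X) (p : ℝ) (Γ : Set (UPath X)) : ℝ≥0∞ :=
  ⨅ (ρ : X → ℝ≥0∞) (_ : Measurable ρ ∧ ∀ γ ∈ Γ, 1 ≤ γ.integral ρ),
    ∫⁻ x, ρ x ^ p ∂μ

/-- `ρ` is a `p`-weak upper gradient of `u`: the upper gradient inequality may fail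
only on a path family of zero `p`-modulus. -/
def IsWeakUpperGradient {X : Type*} [PseudoMetricSpace X] [MeasurableSpace X]
    {Y : Type*} [PseudoEMetricSpace Y] (μ : Measure X) (p : ℝ)
    (u : X → Y) (ρ : X → ℝ≥0∞) : Prop :=
  pathMod μ p {γ : UPath X | ¬ edist (u γ.start) (u γ.finish) ≤ γ.integral ρ} = 0

/-- `ρ` is a `p`-weak upper gradient of `u` in the subset `U`. -/
def IsWeakUpperGradientOn {X : Type*} [PseudoMetricSpace X] [MeasurableSpace X]
    {Y : Type*} [PseudoEMetricSpace Y] (μ : Measure X) (p : ℝ) (U : Set X)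
    (u : X → Y) (ρ : X → ℝ≥0∞) : Prop :=
  pathMod (μ.restrict U) p
    {γ : UPath X | γ.InSet U ∧ ¬ edist (u γ.start) (u γ.finish) ≤ γ.integral ρ} = 0

/-- `ρ` is the minimal `p`-weak upper gradient of `u`: it is a `p`-integrable `p`-weak
upper gradient which is `μ`-a.e. dominated by every other one. -/
def IsMinimalWeakUpperGradient {X : Type*} [PseudoMetricSpace X] [MeasurableSpace X]
    {Y : Type*} [PseudoEMetricSpace Y] (μ : Measure X) (p : ℝ)
    (u : X → Y) (ρ : X → ℝ≥0∞) : Prop :=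
  Measurable ρ ∧ IsWeakUpperGradient μ p u ρ ∧ (∫⁻ x, ρ x ^ p ∂μ) < ⊤ ∧
    ∀ ρ' : X → ℝ≥0∞, Measurable ρ' → IsWeakUpperGradient μ p u ρ' →
      (∫⁻ x, ρ' x ^ p ∂μ) < ⊤ → ∀ᵐ x ∂μ, ρ x ≤ ρ' x

/-! ### Doubling measures, Poincaré inequalities, Ahlfors regularity -/

/-- `μ` is a doubling (Borel) measure with doubling constant `Cμ`:
`0 < μ(2B) ≤ Cμ · μ(B) < ∞` for every ball `B` of radius `r < diam T`. -/
def IsDoubling {X : Type*} [MetricSpace X] [MeasurableSpace X]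
    (μ : Measure X) (Cμ : ℝ≥0∞) : Prop :=
  ∀ (x : X) (r : ℝ), 0 < r → r < Metric.diam (Set.univ : Set X) →
    0 < μ (ball x (2 * r)) ∧ μ (ball x (2 * r)) ≤ Cμ * μ (ball x r) ∧
      Cμ * μ (ball x r) < ⊤

/-- `(X, d, μ)` supports a weak `1`-Poincaré inequality with constants `CP`, `lP`:
`⨍_B |u - u_B| dμ ≤ CP · diam B · ⨍_{lP·B} ρ dμ` for every locally integrable `u`
and every upper gradient `ρ` of `u`, and balls have positive finite measure. -/
def SupportsPoincare {X : Type*} [MetricSpace X] [MeasurableSpace X]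
    (μ : Measure X) (CP lP : ℝ) : Prop :=
  (∀ (x : X) (r : ℝ), 0 < r → 0 < μ (ball x r) ∧ μ (ball x r) < ⊤) ∧
  ∀ (u : X → ℝ) (ρ : X → ℝ≥0∞), LocallyIntegrable u μ → Measurable ρ →
    IsUpperGradient u ρ → ∀ (x : X) (r : ℝ), 0 < r →
      (∫⁻ y in ball x r, ENNReal.ofReal |u y - ⨍ z in ball x r, u z ∂μ| ∂μ) /
          μ (ball x r) ≤
        ENNReal.ofReal (CP * Metric.diam (ball x r)) *
          ((∫⁻ y in ball x (lP * r), ρ y ∂μ) / μ (ball x (lP * r)))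

/-- `μ` is Ahlfors `q`-regular with constants `0 < aA ≤ AA`. -/
def IsAhlforsRegular {X : Type*} [MetricSpace X] [MeasurableSpace X]
    (μ : Measure X) (q aA AA : ℝ) : Prop :=
  0 < aA ∧ aA ≤ AA ∧
    ∀ (x : X) (r : ℝ), 0 < r → r < Metric.diam (Set.univ : Set X) →
      ENNReal.ofReal (aA * r ^ q) ≤ μ (ball x r) ∧
        μ (ball x r) ≤ ENNReal.ofReal (AA * r ^ q)

/-! ### The circle `ℝ/ℤ`, loops and degree -/

lemma intCast_coe_eq_zero (k : ℤ) : ((k : ℝ) : UnitAddCircle) = 0 :=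
  (AddCircle.coe_eq_zero_iff _).mpr ⟨k, by simp⟩

/-- The standard loop of degree `k` in `ℝ/ℤ` based at `y`: `t ↦ y + [k t]`. -/
def stdLoop (k : ℤ) (y : UnitAddCircle) : Path y y where
  toFun := fun t => y + (((k : ℝ) * (t : ℝ) : ℝ) : UnitAddCircle)
  continuous_toFun := by
    refine continuous_const.add ?_
    exact (AddCircle.continuous_mk' 1).comp (by continuity)
  source' := by simp
  target' := by
    have h1 : ((1 : unitInterval) : ℝ) = 1 := rfl
    have h : (((k : ℝ) * ((1 : unitInterval) : ℝ) : ℝ) : UnitAddCircle) = 0 := by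
      rw [h1, mul_one]; exact intCast_coe_eq_zero k
    simp [h]

/-- Concatenation of `n` copies of a loop. -/
def loopPow {X : Type*} [TopologicalSpace X] {x : X} (γ : Path x x) : ℕ → Path x x
  | 0 => Path.refl x
  | n + 1 => (loopPow γ n).trans γ

/-- A loop `γ` based at `x` has degree 1 (relative to the chosen generator `α₀` based
at `x₀`) if it is loop-homotopic to a conjugate `η * α₀ * η⁻¹` of `α₀`. -/
def IsDegreeOneLoop {T : Type*} [TopologicalSpace T] (x₀ : T) (α₀ : Path x₀ x₀)
    {x : T} (γ : Path x x) : Prop :=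
  ∃ η : Path x x₀, Path.Homotopic γ (η.trans (α₀.trans η.symm))

/-- A map `f : T → ℝ/ℤ` has degree `k`: it pushes every degree-1 loop based at `x`
to a loop which is loop-homotopic to `[f x] + k·β`, `β (t) = [t]`. -/
def HasDegree {T : Type*} [TopologicalSpace T] (x₀ : T) (α₀ : Path x₀ x₀)
    (f : T → UnitAddCircle) (k : ℤ) : Prop :=
  ∃ hf : Continuous f, ∀ (x : T) (γ : Path x x), IsDegreeOneLoop x₀ α₀ γ →
    Path.Homotopic (γ.map hf) (stdLoop k (f x))

/-- The class of `α₀` generates `π₁(T, x₀) ≅ ℤ`. -/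
def IsGenerator {T : Type*} [TopologicalSpace T] (x₀ : T) (α₀ : Path x₀ x₀) : Prop :=
  Function.Bijective fun k : ℤ =>
    (FundamentalGroup.fromPath (X := TopCat.of T) ⟦α₀⟧ : FundamentalGroup (TopCat.of T) x₀) ^ k

/-- `T` is semilocally simply connected. -/
def SemilocallySimplyConnected (T : Type*) [TopologicalSpace T] : Prop :=
  ∀ x : T, ∃ U ∈ 𝓝 x, ∀ γ : Path x x, (∀ t, γ t ∈ U) → Path.Homotopic γ (Path.refl x)

/-- `f` is a Lipschitz map of degree 1. -/
def DegOneLip {T : Type*} [MetricSpace T] (x₀ : T) (α₀ : Path x₀ x₀)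
    (f : T → UnitAddCircle) : Prop :=
  (∃ L : ℝ≥0, LipschitzWith L f) ∧ HasDegree x₀ α₀ f 1

/-! ### Capacity and surface modulus -/

/-- The degree 1 `p`-capacity of `T`, defined through minimal `p`-weak upper gradients:
the infimum of `∫ ρ^p dμ` over `p`-weak upper gradients `ρ` of Lipschitz degree-1 maps. -/
def cap {T : Type*} [MetricSpace T] [MeasurableSpace T] (μ : Measure T) (p : ℝ)
    (x₀ : T) (α₀ : Path x₀ x₀) : ℝ≥0∞ :=
  ⨅ (f : T → UnitAddCircle) (_ : DegOneLip x₀ α₀ f) (ρ : T → ℝ≥0∞)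
    (_ : Measurable ρ ∧ IsWeakUpperGradient μ p f ρ),
      ∫⁻ x, ρ x ^ p ∂μ

/-- The pointwise Lipschitz constant `Lip f (x)`. -/
def pLip {T : Type*} [MetricSpace T] (f : T → UnitAddCircle) (x : T) : ℝ≥0∞ :=
  Filter.limsup
    (fun r : ℝ => ⨆ y ∈ ball x r, edist (f x) (f y) / ENNReal.ofReal r) (𝓝[>] (0 : ℝ))

/-- The degree 1 `p`-capacity of `T`, defined through pointwise Lipschitz constants. -/
def capLip {T : Type*} [MetricSpace T] [MeasurableSpace T] (μ : Measure T) (p : ℝ)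
    (x₀ : T) (α₀ : Path x₀ x₀) : ℝ≥0∞ :=
  ⨅ (f : T → UnitAddCircle) (_ : DegOneLip x₀ α₀ f), ∫⁻ x, pLip f x ^ p ∂μ

/-- The codimension 1 spherical Hausdorff measure, as a set function:
`H(A) = sup_{δ>0} inf { ∑ μ(B_i)/r_i }`, the infimum being over countable covers of `A`
by balls `B_i` of radii `r_i ≤ δ`. -/
def codimH {T : Type*} [MetricSpace T] [MeasurableSpace T] (μ : Measure T)
    (A : Set T) : ℝ≥0∞ :=
  ⨆ (δ : ℝ) (_ : 0 < δ),
    ⨅ (c : ℕ → T) (r : ℕ → ℝ) (_ : ∀ i, r i ≤ δ)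
      (_ : A ⊆ ⋃ i, ball (c i) (r i)),
        ∑' i, μ (ball (c i) (r i)) / ENNReal.ofReal (r i)

/-- The integral `∫_S g dH` of `g ≥ 0` over `S` against the codimension 1 Hausdorff
measure, via the layer-cake (Choquet) formula. -/
def choquetIntegral {T : Type*} [MetricSpace T] [MeasurableSpace T] (μ : Measure T)
    (S : Set T) (g : T → ℝ≥0∞) : ℝ≥0∞ :=
  ∫⁻ t in Set.Ioi (0 : ℝ), codimH μ {x | x ∈ S ∧ ENNReal.ofReal t < g x}

/-- The family `Γ*` of all level sets `φ⁻¹[0]` of finite codimension 1 Hausdorff measure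
of continuous degree-1 maps `φ : T → ℝ/ℤ`. -/
def Surfaces {T : Type*} [MetricSpace T] [MeasurableSpace T] (μ : Measure T)
    (x₀ : T) (α₀ : Path x₀ x₀) : Set (Set T) :=
  {S | ∃ φ : T → UnitAddCircle, HasDegree x₀ α₀ φ 1 ∧ S = φ ⁻¹' {0} ∧ codimH μ S < ⊤}

/-- The surface `q`-modulus of a family of surfaces, the surfaces being equipped with the
codimension 1 Hausdorff measure. -/
def surfModOf {T : Type*} [MetricSpace T] [MeasurableSpace T] (μ : Measure T) (q : ℝ)
    (𝒮 : Set (Set T)) : ℝ≥0∞ :=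
  ⨅ (ρ : T → ℝ≥0∞) (_ : Measurable ρ ∧ ∀ S ∈ 𝒮, 1 ≤ choquetIntegral μ S ρ),
    ∫⁻ x, ρ x ^ q ∂μ

/-- The surface modulus `mod_q T`. -/
def surfMod {T : Type*} [MetricSpace T] [MeasurableSpace T] (μ : Measure T) (q : ℝ)
    (x₀ : T) (α₀ : Path x₀ x₀) : ℝ≥0∞ :=
  surfModOf μ q (Surfaces μ x₀ α₀)

/-- The family `Γ*` with the `(q-1)`-dimensional Hausdorff measure instead. -/
def SurfacesH {T : Type*} [MetricSpace T] [MeasurableSpace T] [BorelSpace T] (q : ℝ)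
    (x₀ : T) (α₀ : Path x₀ x₀) : Set (Set T) :=
  {S | ∃ φ : T → UnitAddCircle, HasDegree x₀ α₀ φ 1 ∧ S = φ ⁻¹' {0} ∧ μH[q - 1] S < ⊤}

/-- The surface modulus `mod_q T` defined through the `(q-1)`-dimensional Hausdorff
measures `H^{q-1} ⌞ S`, `S ∈ Γ*`. -/
def surfModH {T : Type*} [MetricSpace T] [MeasurableSpace T] [BorelSpace T]
    (μ : Measure T) (q pstar : ℝ) (x₀ : T) (α₀ : Path x₀ x₀) : ℝ≥0∞ :=
  ⨅ (ρ : T → ℝ≥0∞)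
    (_ : Measurable ρ ∧ ∀ S ∈ SurfacesH (T := T) q x₀ α₀, 1 ≤ ∫⁻ x in S, ρ x ∂μH[q - 1]),
      ∫⁻ x, ρ x ^ pstar ∂μ

/-- The standing assumptions 2.1. -/
def Standing {T : Type*} [MetricSpace T] [MeasurableSpace T] (μ : Measure T)
    (Cμ : ℝ≥0∞) (CP lP : ℝ) (x₀ : T) (α₀ : Path x₀ x₀) : Prop :=
  IsDoubling μ Cμ ∧ SupportsPoincare μ CP lP ∧ SemilocallySimplyConnected T ∧
    IsGenerator x₀ α₀ ∧ ∃ f : T → UnitAddCircle, DegOneLip x₀ α₀ f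

/-! ### The universal cover -/

/-- `π` is a local isometry. -/
def IsLocalIsometry {X Y : Type*} [MetricSpace X] [MetricSpace Y] (π : X → Y) : Prop :=
  ∀ x : X, ∃ ε : ℝ, 0 < ε ∧
    ∀ y ∈ ball x ε, ∀ z ∈ ball x ε, dist (π y) (π z) = dist y z

/-- `(T̃, π)` is the universal cover of `T`, with `T̃` carrying the length metric pulled
back by `π` (so that `π` is a local isometry). -/
def CoverSetup {T Tt : Type*} [MetricSpace T] [MetricSpace Tt] (π : Tt → T) : Prop :=
  IsCoveringMap π ∧ Function.Surjective π ∧ IsLocalIsometry π ∧ SimplyConnectedSpace Tt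

/-- `τ` is the deck transformation of the cover `π` determined by
`τ (γ̃ 0) = γ̃ 1` for every lift `γ̃` of every degree-1 loop `γ`. -/
def IsDeck {T Tt : Type*} [MetricSpace T] [MetricSpace Tt] (π : Tt → T)
    (x₀ : T) (α₀ : Path x₀ x₀) (τ : Tt → Tt) : Prop :=
  Continuous τ ∧ (∀ x, π (τ x) = π x) ∧
    ∀ (x : T) (γ : Path x x), IsDegreeOneLoop x₀ α₀ γ →
      ∀ γt : C(unitInterval, Tt), (∀ t, π (γt t) = γ t) → τ (γt 0) = γt 1

/-- `μ̃` is the natural lift of `μ` to the cover: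
`μ̃ (A) = ∫ #(π⁻¹(x) ∩ A) dμ (x)`. -/
def IsLiftedMeasure {T Tt : Type*} [MetricSpace T] [MeasurableSpace T]
    [MetricSpace Tt] [MeasurableSpace Tt] (π : Tt → T) (μ : Measure T)
    (μt : Measure Tt) : Prop :=
  ∀ A : Set Tt, MeasurableSet A → μt A = ∫⁻ x, ((π ⁻¹' {x} ∩ A).encard : ℝ≥0∞) ∂μ

/-! ### Newtonian spaces -/

/-- The seminorm of `N^{1,p}(U)`. -/
def NSeminorm {X : Type*} [PseudoMetricSpace X] [MeasurableSpace X] (μ : Measure X)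
    (p : ℝ) (U : Set X) (f : X → ℝ) : ℝ≥0∞ :=
  (∫⁻ x in U, ENNReal.ofReal |f x| ^ p ∂μ) ^ (1 / p) +
    ⨅ (ρ : X → ℝ≥0∞) (_ : Measurable ρ ∧ IsWeakUpperGradientOn μ p U f ρ),
      (∫⁻ x in U, ρ x ^ p ∂μ) ^ (1 / p)

/-- `f ∈ N^{1,p}_loc`. -/
def MemNloc {X : Type*} [PseudoMetricSpace X] [MeasurableSpace X] (μ : Measure X)
    (p : ℝ) (f : X → ℝ) : Prop :=
  ∀ U : Set X, IsOpen U → IsCompact (closure U) →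
    (∫⁻ x in U, ENNReal.ofReal |f x| ^ p ∂μ) < ⊤ ∧
      ∃ ρ : X → ℝ≥0∞, Measurable ρ ∧ IsWeakUpperGradientOn μ p U f ρ ∧
        (∫⁻ x in U, ρ x ^ p ∂μ) < ⊤

/-- The collection `F`: nonnegative Borel functions `ρ` on `T` such that `ρ ∘ π` is a
`p`-weak upper gradient of some `f ∈ N^{1,p}_loc (T̃)` with `f ∘ τ - f = 1` a.e. -/
def MemF {T Tt : Type*} [MetricSpace T] [MeasurableSpace T] [MetricSpace Tt]
    [MeasurableSpace Tt] (π : Tt → T) (τ : Tt → Tt) (μt : Measure Tt) (p : ℝ)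
    (ρ : T → ℝ≥0∞) : Prop :=
  Measurable ρ ∧ ∃ f : Tt → ℝ, MemNloc μt p f ∧ (∀ᵐ x ∂μt, f (τ x) - f x = 1) ∧
    IsWeakUpperGradient μt p f (ρ ∘ π)

/-- The capacity `cap_p^F T`. -/
def capF {T Tt : Type*} [MetricSpace T] [MeasurableSpace T] [MetricSpace Tt]
    [MeasurableSpace Tt] (μ : Measure T) (π : Tt → T) (τ : Tt → Tt) (μt : Measure Tt)
    (p : ℝ) : ℝ≥0∞ :=
  ⨅ (ρ : T → ℝ≥0∞) (_ : MemF π τ μt p ρ), ∫⁻ x, ρ x ^ p ∂μ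

/-! ### Miscellaneous operators -/

/-- The restricted Hardy–Littlewood maximal operator `M_R`. -/
def restrMax {T : Type*} [MetricSpace T] [MeasurableSpace T] (μ : Measure T)
    (R : ℝ≥0∞) (g : T → ℝ≥0∞) (x : T) : ℝ≥0∞ :=
  ⨆ (s : ℝ) (_ : 0 < s ∧ ENNReal.ofReal s ≤ R),
    (∫⁻ y in ball x s, g y ∂μ) / μ (ball x s)

/-- The upper Lebesgue integral. -/
def upperLintegral {Y : Type*} [MeasurableSpace Y] (ν : Measure Y)
    (F : Y → ℝ≥0∞) : ℝ≥0∞ :=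
  ⨅ (G : Y → ℝ≥0∞) (_ : Measurable G ∧ ∀ y, F y ≤ G y), ∫⁻ y, G y ∂ν

/-! ### The sets `Ω` and the functions `ψ̃`, `ζ`, `ψ` of Section 4.3 -/

/-- The set of points reachable from `A` by a rectifiable path inside `W`. -/
def reach {T : Type*} [MetricSpace T] (A W : Set T) : Set T :=
  {x | ∃ γ : UPath T, γ.start ∈ A ∧ γ.finish = x ∧ γ.InSet W}

/-- `inf_γ ∫_γ ρ ds` over rectifiable paths connecting `A` to `x` inside `W`. -/
def pathDist {T : Type*} [MetricSpace T] (ρ : T → ℝ≥0∞) (A W : Set T) (x : T) : ℝ≥0∞ :=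
  ⨅ (γ : UPath T) (_ : γ.start ∈ A ∧ γ.finish = x ∧ γ.InSet W), γ.integral ρ

open scoped Classical in
/-- The function `ψ̃`. -/
def psiTilde {T : Type*} [MetricSpace T] (ρ : T → ℝ≥0∞) (A W : Set T) (x : T) : ℝ :=
  if x ∈ reach A W then (pathDist ρ A W x).toReal else 0

/-- The function `min {1, ψ̃}`. -/
def zeta {T : Type*} [MetricSpace T] (ρ : T → ℝ≥0∞) (A W : Set T) (x : T) : ℝ :=
  min 1 (psiTilde ρ A W x)

/-- The competing admissible map `ψ = [min {1, ψ̃}] : T → ℝ/ℤ`. -/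
def psiMap {T : Type*} [MetricSpace T] (ρ : T → ℝ≥0∞) (A W : Set T) (x : T) :
    UnitAddCircle :=
  ((zeta ρ A W x : ℝ) : UnitAddCircle)

end Duality

/-! Near `x` the lift `φ̃` descends to a continuous function `v` with `U⁺ ⊆ {v > 0}`,
`U⁻ ⊆ {v ≤ 0}` and `{v = 0} ⊆ S`. Given a cover of `S ∩ λB` by balls `Bᵢ = B(cᵢ, sᵢ)`, let
`u = min (1, infᵢ dist(·, Bᵢ)/sᵢ)` on `{v > 0}` and `u = 0` on `{v ≤ 0}`. A curve changing
sides crosses `{v = 0}`, where `u = 0`, so `∑ᵢ sᵢ⁻¹ 1_{3Bᵢ}` (made infinite away from `x`) is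
an upper gradient of `u`. Since `u = 1` on `B ∩ U⁺` off `⋃ 2Bᵢ` and `u = 0` on `B ∩ U⁻`, the
weak 1-Poincaré inequality on `B` and doubling bound the smaller of the two proportions by
`C r/μ(λB) · ∑ μ(Bᵢ)/sᵢ`; the infimum over covers gives `H(S ∩ λB)`. -/

namespace Duality

section RealLine

lemma sub_le_mul_volume_of_eq_one_off {h : ℝ → ℝ} {a b : ℝ} {L : ℝ≥0} {P : Set ℝ}
    (hab : a ≤ b) (hh : LipschitzOnWith L h (Icc a b)) (ha : h a ≤ 1)
    (hP : ∀ t ∈ Icc a b, t ∉ P → h t = 1) :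
    ENNReal.ofReal (h a - h b) ≤ L * volume P := by
  set Z := Icc a b ∩ h ⁻¹' Ici (h a)
  have hZ : IsClosed Z := hh.continuousOn.preimage_isClosed_of_isClosed isClosed_Icc isClosed_Ici
  have hZbdd : BddAbove Z := bddAbove_Icc.mono inter_subset_left
  have hcZ : sSup Z ∈ Z := hZ.csSup_mem ⟨a, ⟨le_rfl, hab⟩, show h a ≤ h a from le_rfl⟩ hZbdd
  set c := sSup Z
  have hcb : c ≤ b := hcZ.1.2
  -- after its last visit to `{h ≥ h a}` the function stays below `1`, hence in `P`
  have hIoc : Ioc c b ⊆ P := by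
    intro t ⟨hct, htb⟩
    have ht : t ∈ Icc a b := ⟨hcZ.1.1.trans hct.le, htb⟩
    by_contra htP
    exact hct.not_ge (le_csSup hZbdd ⟨ht, show h a ≤ h t by rw [hP t ht htP]; exact ha⟩)
  have hlip : h c - h b ≤ L * (b - c) := by
    have := hh.dist_le_mul c hcZ.1 b ⟨hab, le_rfl⟩
    rw [Real.dist_eq, Real.dist_eq, abs_sub_comm c, abs_of_nonneg (sub_nonneg.2 hcb)] at this
    exact (le_abs_self _).trans this
  calc ENNReal.ofReal (h a - h b) ≤ ENNReal.ofReal (L * (b - c)) :=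
        ENNReal.ofReal_le_ofReal (by linarith [show h a ≤ h c from hcZ.2])
    _ = L * volume (Ioc c b) := by
        rw [Real.volume_Ioc, ENNReal.ofReal_mul L.coe_nonneg, ENNReal.ofReal_coe_nnreal]
    _ ≤ L * volume P := by gcongr

lemma edist_le_mul_volume_of_eq_one_off {h : ℝ → ℝ} {a b : ℝ} {L : ℝ≥0} {P : Set ℝ}
    (hab : a ≤ b) (hh : LipschitzOnWith L h (Icc a b)) (hle : ∀ t ∈ Icc a b, h t ≤ 1)
    (hP : ∀ t ∈ Icc a b, t ∉ P → h t = 1) :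
    edist (h a) (h b) ≤ L * volume P := by
  have hneg : LipschitzOnWith L (fun t => h (-t)) (Icc (-b) (-a)) := by
    have := hh.comp (LipschitzWith.id.neg : LipschitzWith 1 fun t : ℝ => -t).lipschitzOnWith
      (fun t (ht : t ∈ Icc (-b) (-a)) => (by simpa [neg_le, le_neg] using ht.symm : -t ∈ Icc a b))
    rwa [mul_one] at this
  have hba := sub_le_mul_volume_of_eq_one_off (P := Neg.neg ⁻¹' P) (neg_le_neg hab) hneg
    (by simpa using hle b ⟨hab, le_rfl⟩)
    (fun t ht htP => hP (-t) (by simpa [neg_le, le_neg, and_comm] using ht) htP)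
  rw [Measure.measure_preimage_neg] at hba
  rw [edist_dist, Real.dist_eq, abs_eq_max_neg, ENNReal.ofReal_max, neg_sub]
  exact max_le (sub_le_mul_volume_of_eq_one_off hab hh (hle a ⟨le_rfl, hab⟩) hP)
    (by simpa using hba)

end RealLine

section Paths

variable {X : Type*} [PseudoMetricSpace X]

namespace UPath

def subpath (γ : UPath X) {s t : ℝ} (hs : γ.a ≤ s) (hst : s ≤ t) (ht : t ≤ γ.b) : UPath X :=
  ⟨s, t, hst, γ.toFun, γ.lip.mono (Icc_subset_Icc hs ht)⟩

lemma integral_subpath_le (γ : UPath X) {s t : ℝ} (hs : γ.a ≤ s) (hst : s ≤ t) (ht : t ≤ γ.b)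
    (ρ : X → ℝ≥0∞) : (γ.subpath hs hst ht).integral ρ ≤ γ.integral ρ :=
  lintegral_mono_set (Icc_subset_Icc hs ht)

lemma integral_mono (γ : UPath X) {ρ ρ' : X → ℝ≥0∞} (h : ∀ y, ρ y ≤ ρ' y) :
    γ.integral ρ ≤ γ.integral ρ' :=
  lintegral_mono fun _ => h _

lemma integral_indicator_top_eq_top (γ : UPath X) {O : Set X} (hO : IsOpen O)
    (hab : γ.a < γ.b) {t₀ : ℝ} (ht₀ : t₀ ∈ Icc γ.a γ.b) (hO₀ : γ.toFun t₀ ∈ O) :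
    γ.integral (O.indicator fun _ => ∞) = ∞ := by
  set W := Ioo γ.a γ.b ∩ γ.toFun ⁻¹' O
  have hW : IsOpen W :=
    (γ.lip.continuousOn.mono Ioo_subset_Icc_self).isOpen_inter_preimage isOpen_Ioo hO
  have hWne : W.Nonempty := by
    have : (𝓝[Ioo γ.a γ.b] t₀).NeBot :=
      mem_closure_iff_nhdsWithin_neBot.1 (by rwa [closure_Ioo hab.ne])
    exact Filter.nonempty_of_mem (inter_mem self_mem_nhdsWithin
      (nhdsWithin_mono _ Ioo_subset_Icc_self (γ.lip.continuousOn t₀ ht₀ (hO.mem_nhds hO₀))))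
  refine eq_top_iff.2 ?_
  calc ∞ = ∫⁻ _ in W, ∞ := by
        rw [setLIntegral_const, ENNReal.top_mul (hW.measure_pos volume hWne).ne']
    _ ≤ ∫⁻ t in W, O.indicator (fun _ => ∞) (γ.toFun t) :=
        setLIntegral_mono' hW.measurableSet fun t ht => by
          rw [indicator_of_mem (show γ.toFun t ∈ O from ht.2)]
    _ ≤ γ.integral (O.indicator fun _ => ∞) :=
        lintegral_mono_set (inter_subset_left.trans Ioo_subset_Icc_self)

end UPath

variable {Y : Type*} [PseudoEMetricSpace Y]

lemma IsUpperGradient.edist_le_integral {u : X → Y} {ρ : X → ℝ≥0∞} (hu : IsUpperGradient u ρ)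
    (γ : UPath X) {s t : ℝ} (hs : s ∈ Icc γ.a γ.b) (ht : t ∈ Icc γ.a γ.b) :
    edist (u (γ.toFun s)) (u (γ.toFun t)) ≤ γ.integral ρ := by
  rcases le_total s t with hst | hts
  · exact (hu (γ.subpath hs.1 hst ht.2)).trans (γ.integral_subpath_le _ _ _ ρ)
  · rw [edist_comm]
    exact (hu (γ.subpath ht.1 hts hs.2)).trans (γ.integral_subpath_le _ _ _ ρ)

lemma isUpperGradient_add_indicator_top {u : X → Y} {ρ : X → ℝ≥0∞} {F : Set X}
    (hF : IsClosed F)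
    (h : ∀ γ : UPath X, γ.InSet F → edist (u γ.start) (u γ.finish) ≤ γ.integral ρ) :
    IsUpperGradient u (ρ + Fᶜ.indicator fun _ => ∞) := by
  intro γ
  by_cases hγ : γ.InSet F
  · exact (h γ hγ).trans (γ.integral_mono fun _ => le_self_add)
  obtain ⟨t₀, ht₀, hout⟩ : ∃ t ∈ Icc γ.a γ.b, γ.toFun t ∉ F := by
    simpa [UPath.InSet, and_assoc] using hγ
  rcases γ.hab.eq_or_lt with hab | hab
  · simp [UPath.start, UPath.finish, hab]
  · calc edist (u γ.start) (u γ.finish) ≤ γ.integral (Fᶜ.indicator fun _ => ∞) := by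
          rw [γ.integral_indicator_top_eq_top hF.isOpen_compl hab ht₀ hout]; exact le_top
      _ ≤ γ.integral (ρ + Fᶜ.indicator fun _ => ∞) := γ.integral_mono fun _ => le_add_self

lemma isUpperGradient_of_eq_one_off {g : X → ℝ} {L : ℝ≥0} {K : Set X} {ρ : X → ℝ≥0∞}
    (hg : LipschitzWith L g) (hle : ∀ y, g y ≤ 1) (hK : IsClosed K) (hone : ∀ y ∉ K, g y = 1)
    (hρ : ∀ y ∈ K, (L : ℝ≥0∞) ≤ ρ y) : IsUpperGradient g ρ := by
  intro γ
  set P := Icc γ.a γ.b ∩ γ.toFun ⁻¹' K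
  have hP : MeasurableSet P :=
    (γ.lip.continuousOn.preimage_isClosed_of_isClosed isClosed_Icc hK).measurableSet
  have hlip : LipschitzOnWith L (g ∘ γ.toFun) (Icc γ.a γ.b) := by
    simpa using hg.comp_lipschitzOnWith γ.lip
  calc edist (g γ.start) (g γ.finish) ≤ L * volume P :=
        edist_le_mul_volume_of_eq_one_off γ.hab hlip (fun _ _ => hle _)
          fun _ ht htP => hone _ fun hK => htP ⟨ht, hK⟩
    _ = ∫⁻ _ in P, (L : ℝ≥0∞) := (setLIntegral_const _ _).symm
    _ ≤ ∫⁻ t in P, ρ (γ.toFun t) := setLIntegral_mono' hP fun _ ht => hρ _ ht.2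
    _ ≤ γ.integral ρ := lintegral_mono_set inter_subset_left

lemma IsUpperGradient.ciInf {ι : Type*} [Nonempty ι] {f : ι → X → ℝ} {ρ : X → ℝ≥0∞}
    (hf : ∀ i, IsUpperGradient (f i) ρ) (hbdd : ∀ y, BddBelow (range fun i => f i y)) :
    IsUpperGradient (fun y => ⨅ i, f i y) ρ := by
  intro γ
  by_cases hI : γ.integral ρ = ∞
  · simp [hI]
  set M := (γ.integral ρ).toReal
  have key : ∀ p q, (∀ i, dist (f i p) (f i q) ≤ M) → ⨅ i, f i p ≤ (⨅ i, f i q) + M := by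
    intro p q h
    rw [← sub_le_iff_le_add]
    refine le_ciInf fun i => ?_
    linarith [ciInf_le (hbdd p) i, (abs_le.1 (h i)).2, Real.dist_eq (f i p) (f i q),
      le_abs_self (f i p - f i q)]
  have hi : ∀ i, dist (f i γ.start) (f i γ.finish) ≤ M := fun i => by
    rw [← ENNReal.ofReal_le_iff_le_toReal hI, ← edist_dist]; exact hf i γ
  rw [edist_dist, ENNReal.ofReal_le_iff_le_toReal hI, Real.dist_eq, abs_sub_le_iff]
  constructor <;> linarith [key _ _ hi, key _ _ fun i => (dist_comm _ _).le.trans (hi i)]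

lemma edist_indicator_le_of_inSet {w : X → ℝ} {ρ : X → ℝ≥0∞} (hw : IsUpperGradient w ρ)
    {V : Set X} {v : X → ℝ} (hv : ContinuousOn v V) (hw0 : ∀ y ∈ V, v y = 0 → w y = 0)
    {γ : UPath X} (hγ : γ.InSet V) :
    edist ((V ∩ {y | 0 < v y}).indicator w γ.start)
      ((V ∩ {y | 0 < v y}).indicator w γ.finish) ≤ γ.integral ρ := by
  have hvγ : ContinuousOn (v ∘ γ.toFun) (Icc γ.a γ.b) := hv.comp γ.lip.continuousOn hγ
  -- a sign change of `v` along `γ` forces `γ` through the zero set of `w`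
  have cross : ∀ s ∈ Icc γ.a γ.b, ∀ t ∈ Icc γ.a γ.b, 0 < v (γ.toFun s) → v (γ.toFun t) ≤ 0 →
      edist (w (γ.toFun s)) 0 ≤ γ.integral ρ := by
    intro s hs t ht hps hnt
    have hsub : uIcc s t ⊆ Icc γ.a γ.b := uIcc_subset_Icc hs ht
    obtain ⟨t', ht', hzero⟩ :=
      intermediate_value_uIcc (hvγ.mono hsub) (mem_uIcc.2 (Or.inr ⟨hnt, hps.le⟩))
    rw [← hw0 _ (hγ t' (hsub ht')) hzero]
    exact hw.edist_le_integral γ hs (hsub ht')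
  have hind : ∀ t ∈ Icc γ.a γ.b, (V ∩ {y | 0 < v y}).indicator w (γ.toFun t) =
      if 0 < v (γ.toFun t) then w (γ.toFun t) else 0 := fun t ht => by
    simp [indicator, hγ t ht]
  have ha : γ.a ∈ Icc γ.a γ.b := left_mem_Icc.2 γ.hab
  have hb : γ.b ∈ Icc γ.a γ.b := right_mem_Icc.2 γ.hab
  rw [UPath.start, UPath.finish, hind _ ha, hind _ hb]
  split_ifs with h₁ h₂ h₂
  · exact hw.edist_le_integral γ ha hb
  · exact cross _ ha _ hb h₁ (not_lt.1 h₂)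
  · rw [edist_comm]; exact cross _ hb _ ha h₂ (not_lt.1 h₁)
  · simp

end Paths

section Cover

variable {X : Type*} [PseudoMetricSpace X]

/-- A ball of nonpositive radius is empty; its cutoff is `1`, so it does not affect
`coverCutoff`. -/
def ballCutoff (c : X) (s : ℝ) (y : X) : ℝ :=
  if 0 < s then min 1 (infDist y (ball c s) / s) else 1

def coverCutoff (c : ℕ → X) (s : ℕ → ℝ) (y : X) : ℝ :=
  ⨅ i, ballCutoff (c i) (s i) y

def coverGradient (c : ℕ → X) (s : ℕ → ℝ) (y : X) : ℝ≥0∞ :=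
  ∑' i, (ball (c i) (3 * s i)).indicator (fun _ => (ENNReal.ofReal (s i))⁻¹) y

lemma ballCutoff_nonneg (c : X) (s : ℝ) (y : X) : 0 ≤ ballCutoff c s y := by
  unfold ballCutoff; split_ifs with hs
  · exact le_min zero_le_one (div_nonneg infDist_nonneg hs.le)
  · exact zero_le_one

lemma ballCutoff_le_one (c : X) (s : ℝ) (y : X) : ballCutoff c s y ≤ 1 := by
  unfold ballCutoff; split_ifs
  exacts [min_le_left _ _, le_rfl]

lemma continuous_ballCutoff (c : X) (s : ℝ) : Continuous (ballCutoff c s) := by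
  unfold ballCutoff; split_ifs
  exacts [continuous_const.min ((continuous_infDist_pt _).div_const _), continuous_const]

lemma ballCutoff_eq_zero {c y : X} {s : ℝ} (hy : y ∈ ball c s) : ballCutoff c s y = 0 := by
  have hs : 0 < s := dist_nonneg.trans_lt hy
  simp [ballCutoff, hs, infDist_zero_of_mem hy]

lemma ballCutoff_eq_one {c y : X} {s : ℝ} (hy : y ∉ ball c (2 * s)) : ballCutoff c s y = 1 := by
  unfold ballCutoff; split_ifs with hs
  · refine min_eq_left ((one_le_div hs).2 ((le_infDist ⟨c, mem_ball_self hs⟩).2 fun z hz => ?_))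
    have := dist_triangle y z c
    linarith [mem_ball.1 hz, not_lt.1 (mt mem_ball.2 hy)]
  · rfl

lemma isUpperGradient_ballCutoff {c : X} {s : ℝ} {ρ : X → ℝ≥0∞}
    (hρ : ∀ y ∈ ball c (3 * s), (ENNReal.ofReal s)⁻¹ ≤ ρ y) :
    IsUpperGradient (ballCutoff c s) ρ := by
  by_cases hs : 0 < s
  swap
  · intro γ; simp [ballCutoff, hs]
  have hcut : ballCutoff c s = fun y => min 1 (infDist y (ball c s) / s) :=
    funext fun _ => if_pos hs
  have hlip : LipschitzWith s.toNNReal⁻¹ (ballCutoff c s) := by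
    rw [hcut]
    refine LipschitzWith.const_min (LipschitzWith.of_dist_le_mul fun y z => ?_) 1
    rw [Real.dist_eq, ← sub_div, abs_div, abs_of_pos hs, NNReal.coe_inv,
      Real.coe_toNNReal _ hs.le, inv_mul_eq_div]
    have hyz := infDist_le_infDist_add_dist (x := y) (y := z) (s := ball c s)
    have hzy := infDist_le_infDist_add_dist (x := z) (y := y) (s := ball c s)
    rw [dist_comm z y] at hzy
    exact div_le_div_of_nonneg_right (abs_sub_le_iff.2 ⟨by linarith, by linarith⟩) hs.le
  refine isUpperGradient_of_eq_one_off hlip (ballCutoff_le_one c s)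
    (isClosed_le (continuous_infDist_pt _) continuous_const) (K := {y | infDist y (ball c s) ≤ s})
    (fun y hy => ?_) (fun y hy => ?_)
  · rw [hcut]
    exact min_eq_left ((one_le_div hs).2 (not_le.1 hy).le)
  · obtain ⟨z, hz, hyz⟩ := (infDist_lt_iff ⟨c, mem_ball_self hs⟩).1
      (lt_of_le_of_lt hy (by linarith : s < 2 * s))
    rw [ENNReal.coe_inv (by simpa using hs), ← ENNReal.ofReal.eq_def]
    refine hρ y (mem_ball.2 ?_)
    linarith [dist_triangle y z c, mem_ball.1 hz]

lemma coverCutoff_bddBelow (c : ℕ → X) (s : ℕ → ℝ) (y : X) :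
    BddBelow (range fun i => ballCutoff (c i) (s i) y) :=
  ⟨0, forall_mem_range.2 fun _ => ballCutoff_nonneg _ _ y⟩

lemma coverCutoff_nonneg (c : ℕ → X) (s : ℕ → ℝ) (y : X) : 0 ≤ coverCutoff c s y :=
  le_ciInf fun _ => ballCutoff_nonneg _ _ y

lemma coverCutoff_le_one (c : ℕ → X) (s : ℕ → ℝ) (y : X) : coverCutoff c s y ≤ 1 :=
  (ciInf_le (coverCutoff_bddBelow c s y) 0).trans (ballCutoff_le_one _ _ y)

lemma coverCutoff_eq_zero {c : ℕ → X} {s : ℕ → ℝ} {y : X} {i : ℕ} (hy : y ∈ ball (c i) (s i)) :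
    coverCutoff c s y = 0 :=
  le_antisymm ((ciInf_le (coverCutoff_bddBelow c s y) i).trans_eq (ballCutoff_eq_zero hy))
    (coverCutoff_nonneg c s y)

lemma coverCutoff_eq_one {c : ℕ → X} {s : ℕ → ℝ} {y : X}
    (hy : y ∉ ⋃ i, ball (c i) (2 * s i)) : coverCutoff c s y = 1 := by
  simp only [mem_iUnion, not_exists] at hy
  simp [coverCutoff, ballCutoff_eq_one (hy _)]

lemma isUpperGradient_coverCutoff (c : ℕ → X) (s : ℕ → ℝ) :
    IsUpperGradient (coverCutoff c s) (coverGradient c s) :=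
  IsUpperGradient.ciInf (fun i => isUpperGradient_ballCutoff fun y hy => by
      have := ENNReal.le_tsum (f := fun i => (ball (c i) (3 * s i)).indicator
          (fun _ => (ENNReal.ofReal (s i))⁻¹) y) i
      rwa [indicator_of_mem hy] at this)
    (coverCutoff_bddBelow c s)

def positiveSideCutoff (V : Set X) (v : X → ℝ) (c : ℕ → X) (s : ℕ → ℝ) : X → ℝ :=
  (V ∩ {y | 0 < v y}).indicator (coverCutoff c s)

lemma positiveSideCutoff_eq_one {V : Set X} {v : X → ℝ} {c : ℕ → X} {s : ℕ → ℝ} {y : X}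
    (hyV : y ∈ V) (hy : 0 < v y) (hyc : y ∉ ⋃ i, ball (c i) (2 * s i)) :
    positiveSideCutoff V v c s y = 1 := by
  rw [positiveSideCutoff, indicator_of_mem (show y ∈ V ∩ {y | 0 < v y} from ⟨hyV, hy⟩)]
  exact coverCutoff_eq_one hyc

lemma positiveSideCutoff_eq_zero {V : Set X} {v : X → ℝ} (c : ℕ → X) (s : ℕ → ℝ) {y : X}
    (hy : v y ≤ 0) : positiveSideCutoff V v c s y = 0 :=
  indicator_of_notMem (fun h => hy.not_gt h.2) _

lemma norm_positiveSideCutoff_le_one (V : Set X) (v : X → ℝ) (c : ℕ → X) (s : ℕ → ℝ) (y : X) :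
    ‖positiveSideCutoff V v c s y‖ ≤ 1 := by
  refine (norm_indicator_le_norm_self _ _).trans ?_
  rw [Real.norm_of_nonneg (coverCutoff_nonneg c s y)]
  exact coverCutoff_le_one c s y

lemma isUpperGradient_positiveSideCutoff {V F : Set X} {v : X → ℝ} {c : ℕ → X} {s : ℕ → ℝ}
    (hv : ContinuousOn v V) (hF : IsClosed F) (hFV : F ⊆ V)
    (hcov : {y | v y = 0} ∩ V ⊆ ⋃ i, ball (c i) (s i)) :
    IsUpperGradient (positiveSideCutoff V v c s) (coverGradient c s + Fᶜ.indicator fun _ => ∞) :=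
  isUpperGradient_add_indicator_top hF fun _ hγ =>
    edist_indicator_le_of_inSet (isUpperGradient_coverCutoff c s) hv
      (fun _ hy hy0 => (mem_iUnion.1 (hcov ⟨hy0, hy⟩)).elim fun _ hi => coverCutoff_eq_zero hi)
      fun t ht => hFV (hγ t ht)

variable [MeasurableSpace X] [OpensMeasurableSpace X]

lemma measurable_coverCutoff (c : ℕ → X) (s : ℕ → ℝ) : Measurable (coverCutoff c s) :=
  Measurable.iInf fun _ => (continuous_ballCutoff _ _).measurable

lemma measurable_positiveSideCutoff {V : Set X} {v : X → ℝ} (hV : IsOpen V)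
    (hv : ContinuousOn v V) (c : ℕ → X) (s : ℕ → ℝ) : Measurable (positiveSideCutoff V v c s) :=
  (measurable_coverCutoff c s).indicator
    (hv.isOpen_inter_preimage hV isOpen_Ioi).measurableSet

lemma measurable_coverGradient (c : ℕ → X) (s : ℕ → ℝ) : Measurable (coverGradient c s) :=
  Measurable.tsum fun _ => measurable_const.indicator measurableSet_ball

end Cover

section Doubling

variable {X : Type*} [MetricSpace X] [MeasurableSpace X] {μ : Measure X} {D : ℝ≥0∞}

lemma IsDoubling.measure_ball_two_mul_le [CompactSpace X] {Cμ : ℝ≥0∞} (h : IsDoubling μ Cμ)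
    (y : X) {s : ℝ} (hs : 0 < s) :
    μ (ball y (2 * s)) ≤ (Cμ.toNNReal + 1) * μ (ball y s) := by
  set d := diam (univ : Set X)
  have hdist : ∀ z, dist z y ≤ d := fun z =>
    dist_le_diam_of_mem isCompact_univ.isBounded (mem_univ z) (mem_univ y)
  rcases le_or_gt d 0 with hd | hd
  · have huniv : ∀ t > 0, ball y t = univ := fun t ht =>
      eq_univ_of_forall fun z => mem_ball.2 ((hdist z).trans_lt (hd.trans_lt ht))
    rw [huniv _ (by positivity), huniv s hs]
    exact le_mul_of_one_le_left' le_add_self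
  obtain ⟨hpos, hle, hlt⟩ := h y (d / 2) (by positivity) (by linarith)
  -- `IsDoubling` allows `Cμ = ⊤` only on a one-point space
  have hC : Cμ ≠ ⊤ := by
    rintro rfl
    have h0 : μ (ball y (d / 2)) = 0 := by
      by_contra h0
      simp [ENNReal.top_mul h0] at hlt
    simp [h0] at hle
    exact hpos.ne' hle
  calc μ (ball y (2 * s)) ≤ Cμ * μ (ball y s) := ?_
    _ ≤ (Cμ.toNNReal + 1) * μ (ball y s) := by
        gcongr; rw [ENNReal.coe_toNNReal hC]; exact le_self_add
  rcases lt_or_ge s d with hsd | hsd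
  · exact (h y s hs hsd).2.1
  · calc μ (ball y (2 * s)) ≤ μ (ball y (2 * (3 / 4 * d))) :=
          measure_mono fun z _ => mem_ball.2 (by linarith [hdist z])
      _ ≤ Cμ * μ (ball y (3 / 4 * d)) := (h y _ (by positivity) (by linarith)).2.1
      _ ≤ Cμ * μ (ball y s) := by gcongr; linarith

variable (hD : ∀ (y : X) (s : ℝ), 0 < s → μ (ball y (2 * s)) ≤ D * μ (ball y s))
include hD

lemma measure_ball_le_pow_mul (n : ℕ) {y : X} {s t : ℝ} (hs : 0 < s) (ht : t ≤ 2 ^ n * s) :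
    μ (ball y t) ≤ D ^ n * μ (ball y s) := by
  suffices h : ∀ n : ℕ, μ (ball y (2 ^ n * s)) ≤ D ^ n * μ (ball y s) from
    (measure_mono (ball_subset_ball ht)).trans (h n)
  intro n
  induction n with
  | zero => simp
  | succ n ih =>
    calc μ (ball y (2 ^ (n + 1) * s)) = μ (ball y (2 * (2 ^ n * s))) := by ring_nf
      _ ≤ D * μ (ball y (2 ^ n * s)) := hD y _ (by positivity)
      _ ≤ D * (D ^ n * μ (ball y s)) := by gcongr
      _ = D ^ (n + 1) * μ (ball y s) := by ring

lemma measure_iUnion_ball_two_mul_le {c : ℕ → X} {s : ℕ → ℝ} {δ : ℝ} (hs : ∀ i, s i ≤ δ) :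
    μ (⋃ i, ball (c i) (2 * s i)) ≤
      D * ENNReal.ofReal δ * ∑' i, μ (ball (c i) (s i)) / ENNReal.ofReal (s i) := by
  rw [← ENNReal.tsum_mul_left]
  refine (measure_iUnion_le _).trans (ENNReal.tsum_le_tsum fun i => ?_)
  rcases le_or_gt (s i) 0 with hi | hi
  · simp [ball_eq_empty.2 (by linarith : 2 * s i ≤ 0)]
  calc μ (ball (c i) (2 * s i)) ≤ D * μ (ball (c i) (s i)) := hD _ _ hi
    _ = D * ENNReal.ofReal (s i) * (μ (ball (c i) (s i)) / ENNReal.ofReal (s i)) := by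
        rw [mul_assoc, ENNReal.mul_div_cancel (ENNReal.ofReal_pos.2 hi).ne' ENNReal.ofReal_ne_top]
    _ ≤ _ := by gcongr; exact hs i

lemma lintegral_coverGradient_le [OpensMeasurableSpace X] (c : ℕ → X) (s : ℕ → ℝ) :
    ∫⁻ y, coverGradient c s y ∂μ ≤ D ^ 2 * ∑' i, μ (ball (c i) (s i)) / ENNReal.ofReal (s i) := by
  simp only [coverGradient]
  rw [lintegral_tsum fun i => (measurable_const.indicator measurableSet_ball).aemeasurable,
    ← ENNReal.tsum_mul_left]
  refine ENNReal.tsum_le_tsum fun i => ?_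
  rw [lintegral_indicator_const measurableSet_ball]
  rcases le_or_gt (s i) 0 with hi | hi
  · simp [ball_eq_empty.2 (by linarith : 3 * s i ≤ 0)]
  calc (ENNReal.ofReal (s i))⁻¹ * μ (ball (c i) (3 * s i))
      ≤ (ENNReal.ofReal (s i))⁻¹ * (D ^ 2 * μ (ball (c i) (s i))) := by
        gcongr; exact measure_ball_le_pow_mul hD 2 hi (by norm_num; linarith)
    _ = _ := by rw [div_eq_mul_inv]; ring

end Doubling

lemma min_measure_level_le_two_mul_setLIntegral {X : Type*} [MeasurableSpace X] {μ : Measure X}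
    {u : X → ℝ} (hu : Measurable u) (s : Set X) (c : ℝ) :
    min (μ (s ∩ {y | u y = 1})) (μ (s ∩ {y | u y = 0})) ≤
      2 * ∫⁻ y in s, ENNReal.ofReal |u y - c| ∂μ := by
  have level : ∀ a : ℝ, 1 / 2 ≤ |a - c| →
      μ (s ∩ {y | u y = a}) ≤ 2 * ∫⁻ y in s, ENNReal.ofReal |u y - c| ∂μ := by
    intro a ha
    calc μ (s ∩ {y | u y = a}) = ∫⁻ _ in s ∩ {y | u y = a}, 1 ∂μ := by
          rw [setLIntegral_const, one_mul]
      _ ≤ ∫⁻ y in s ∩ {y | u y = a}, 2 * ENNReal.ofReal |u y - c| ∂μ :=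
          setLIntegral_mono (by fun_prop) fun y hy => by
            rw [show u y = a from hy.2, ← ENNReal.ofReal_ofNat 2,
              ← ENNReal.ofReal_mul zero_le_two, ← ENNReal.ofReal_one]
            exact ENNReal.ofReal_le_ofReal (by linarith)
      _ ≤ ∫⁻ y in s, 2 * ENNReal.ofReal |u y - c| ∂μ := lintegral_mono_set inter_subset_left
      _ = 2 * ∫⁻ y in s, ENNReal.ofReal |u y - c| ∂μ := lintegral_const_mul _ (by fun_prop)
  have htri := abs_add_le (1 - c) c
  rw [sub_add_cancel, abs_one] at htri
  rcases le_or_gt (1 / 2) |1 - c| with h | h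
  · exact (min_le_left _ _).trans (level 1 h)
  · exact (min_le_right _ _).trans (level 0 (by rw [zero_sub, abs_neg]; linarith))

lemma min_measure_sign_le {X : Type*} [PseudoMetricSpace X] [MeasurableSpace X]
    {μ : Measure X} {V A : Set X} {v : X → ℝ} {c : ℕ → X} {s : ℕ → ℝ}
    (hu : Measurable (positiveSideCutoff V v c s)) (hA : A ⊆ V) (a : ℝ) :
    min (μ (A ∩ {y | 0 < v y})) (μ (A ∩ {y | v y ≤ 0})) ≤
      2 * ∫⁻ y in A, ENNReal.ofReal |positiveSideCutoff V v c s y - a| ∂μ +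
        μ (⋃ i, ball (c i) (2 * s i)) := by
  set u := positiveSideCutoff V v c s
  set G := ⋃ i, ball (c i) (2 * s i)
  have hpos : A ∩ {y | 0 < v y} ⊆ (A ∩ {y | u y = 1}) ∪ G := by
    rintro y ⟨hyA, hyv⟩
    by_cases hyG : y ∈ G
    · exact Or.inr hyG
    · exact Or.inl ⟨hyA, positiveSideCutoff_eq_one (hA hyA) hyv hyG⟩
  have hnonpos : A ∩ {y | v y ≤ 0} ⊆ A ∩ {y | u y = 0} :=
    fun y ⟨hyA, hyv⟩ => ⟨hyA, positiveSideCutoff_eq_zero c s hyv⟩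
  calc _ ≤ min (μ (A ∩ {y | u y = 1}) + μ G) (μ (A ∩ {y | u y = 0}) + μ G) :=
        min_le_min ((measure_mono hpos).trans (measure_union_le _ _))
          ((measure_mono hnonpos).trans le_self_add)
    _ = min (μ (A ∩ {y | u y = 1})) (μ (A ∩ {y | u y = 0})) + μ G := min_add_add_right _ _ _
    _ ≤ _ := by gcongr; exact min_measure_level_le_two_mul_setLIntegral hu _ _

lemma ofReal_mul_diam_ball_le {X : Type*} [PseudoMetricSpace X] (C : ℝ) (x : X) {r : ℝ}
    (hr : 0 ≤ r) :
    ENNReal.ofReal (C * diam (ball x r)) ≤ 2 * ENNReal.ofReal C * ENNReal.ofReal r :=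
  calc ENNReal.ofReal (C * diam (ball x r))
      = ENNReal.ofReal C * ENNReal.ofReal (diam (ball x r)) := ENNReal.ofReal_mul' diam_nonneg
    _ ≤ ENNReal.ofReal C * ENNReal.ofReal (2 * r) := by gcongr; exact diam_ball hr
    _ = 2 * ENNReal.ofReal C * ENNReal.ofReal r := by
        rw [ENNReal.ofReal_mul zero_le_two, ENNReal.ofReal_ofNat]; ring

lemma le_codimH_of_forall_cover {X : Type*} [MetricSpace X] [MeasurableSpace X]
    {μ : Measure X} {A : Set X} {a : ℝ≥0∞} {δ : ℝ} (hδ : 0 < δ)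
    (h : ∀ (c : ℕ → X) (s : ℕ → ℝ), (∀ i, s i ≤ δ) → A ⊆ ⋃ i, ball (c i) (s i) →
      a ≤ ∑' i, μ (ball (c i) (s i)) / ENNReal.ofReal (s i)) :
    a ≤ codimH μ A :=
  le_iSup₂_of_le δ hδ <| le_iInf₂ fun c s => le_iInf₂ fun hs hA => h c s hs hA

lemma codimH_mono {X : Type*} [MetricSpace X] [MeasurableSpace X] (μ : Measure X)
    {A A' : Set X} (h : A ⊆ A') : codimH μ A ≤ codimH μ A' :=
  iSup₂_mono fun _ _ => iInf₂_mono fun _ _ => iInf_mono fun _ =>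
    iInf_mono' fun hA' => ⟨h.trans hA', le_rfl⟩

def isoDilation (lP : ℝ) : ℝ := 4 * max 1 lP

/-- `D ^ (⌈1 / lP⌉₊ + 2)` compares `μ (ball x (isoDilation lP * r))` with the Poincaré ball
`μ (ball x (lP * r))`, and `D ^ 2` compares `μ (ball c (3 * s))` with `μ (ball c s)`. -/
def isoConst (D : ℝ≥0∞) (CP lP : ℝ) : ℝ≥0∞ :=
  4 * ENNReal.ofReal CP * D ^ (⌈1 / lP⌉₊ + 4) + D

lemma one_le_isoDilation (lP : ℝ) : 1 ≤ isoDilation lP := by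
  unfold isoDilation; linarith [le_max_left 1 lP]

lemma isoDilation_le_two_pow_mul {lP : ℝ} (hlP : 0 < lP) :
    isoDilation lP ≤ 2 ^ (⌈1 / lP⌉₊ + 2) * lP := by
  have hk : 1 ≤ 2 ^ ⌈1 / lP⌉₊ * lP := by
    have h : 1 / lP ≤ 2 ^ ⌈1 / lP⌉₊ :=
      (Nat.le_ceil _).trans (by exact_mod_cast Nat.lt_two_pow_self.le)
    rwa [div_le_iff₀ hlP] at h
  have hk' : (1 : ℝ) ≤ 2 ^ ⌈1 / lP⌉₊ := one_le_pow₀ (by norm_num)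
  rw [isoDilation, pow_add]
  rcases le_total 1 lP with h | h
  · rw [max_eq_right h]; nlinarith
  · rw [max_eq_left h]; nlinarith

lemma isoConst_pos {D : ℝ≥0∞} (hD : D ≠ 0) (CP lP : ℝ) : 0 < isoConst D CP lP :=
  (pos_iff_ne_zero.2 hD).trans_le le_add_self

lemma isoConst_lt_top {D : ℝ≥0∞} (hD : D ≠ ⊤) (CP lP : ℝ) : isoConst D CP lP < ⊤ := by
  simp [isoConst, ENNReal.mul_lt_top, hD.lt_top]

lemma setLIntegral_div_measure_ball_le
    {T : Type*} [MetricSpace T] [MeasurableSpace T] {μ : Measure T} {D : ℝ≥0∞}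
    {lP : ℝ} (hD : ∀ (y : T) (s : ℝ), 0 < s → μ (ball y (2 * s)) ≤ D * μ (ball y s))
    (hD0 : D ≠ 0) (hDtop : D ≠ ⊤) {x : T} {r : ℝ} (hr : 0 < r) (g : T → ℝ≥0∞) :
    (∫⁻ y in ball x (lP * r), g y ∂μ) / μ (ball x (lP * r)) ≤
      D ^ (⌈1 / lP⌉₊ + 2) * (∫⁻ y in ball x (lP * r), g y ∂μ) /
        μ (ball x (isoDilation lP * r)) := by
  rcases le_or_gt lP 0 with hlP | hlP
  · simp [ball_eq_empty.2 (by nlinarith : lP * r ≤ 0)]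
  rw [← ENNReal.mul_div_mul_left _ _ (pow_ne_zero _ hD0) (ENNReal.pow_ne_top hDtop)]
  refine ENNReal.div_le_div_left (measure_ball_le_pow_mul hD _ (by positivity) ?_) _
  nlinarith [isoDilation_le_two_pow_mul hlP]

lemma SupportsPoincare.isLocallyFiniteMeasure {T : Type*} [MetricSpace T] [MeasurableSpace T]
    {μ : Measure T} {CP lP : ℝ} (hP : SupportsPoincare μ CP lP) :
    IsLocallyFiniteMeasure μ :=
  ⟨fun y => ⟨ball y 1, ball_mem_nhds y one_pos, (hP.1 y 1 one_pos).2⟩⟩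

section Isoperimetric

variable {T : Type*} [MetricSpace T] [MeasurableSpace T] [BorelSpace T] {μ : Measure T}
  {D : ℝ≥0∞} {CP lP : ℝ}

lemma poincare_positiveSideCutoff
    (hD : ∀ (y : T) (s : ℝ), 0 < s → μ (ball y (2 * s)) ≤ D * μ (ball y s))
    (hD0 : D ≠ 0) (hDtop : D ≠ ⊤) (hP : SupportsPoincare μ CP lP) {v : T → ℝ} {x : T}
    {r : ℝ} (hr : 0 < r) (hv : ContinuousOn v (ball x (isoDilation lP * r)))
    {c : ℕ → T} {s : ℕ → ℝ}
    (hcov : {y | v y = 0} ∩ ball x (isoDilation lP * r) ⊆ ⋃ i, ball (c i) (s i)) :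
    (∫⁻ y in ball x r, ENNReal.ofReal |positiveSideCutoff (ball x (isoDilation lP * r)) v c s y -
        ⨍ z in ball x r, positiveSideCutoff (ball x (isoDilation lP * r)) v c s z ∂μ| ∂μ) /
        μ (ball x r) ≤
      2 * ENNReal.ofReal CP * ENNReal.ofReal r * (D ^ (⌈1 / lP⌉₊ + 4) *
        (∑' i, μ (ball (c i) (s i)) / ENNReal.ofReal (s i)) / μ (ball x (isoDilation lP * r))) := by
  set R := isoDilation lP * r
  set u := positiveSideCutoff (ball x R) v c s
  set ρ := coverGradient c s + (closedBall x (R / 4))ᶜ.indicator fun _ => ∞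
  have hlPR : lP * r ≤ R / 4 := by
    simp only [R, isoDilation]; nlinarith [le_max_right 1 lP]
  have hu : Measurable u := measurable_positiveSideCutoff isOpen_ball hv c s
  have hug : IsUpperGradient u ρ := isUpperGradient_positiveSideCutoff hv isClosed_closedBall
    (closedBall_subset_ball (by nlinarith [one_le_isoDilation lP])) hcov
  have hloc : LocallyIntegrable u μ :=
    haveI := hP.isLocallyFiniteMeasure
    (locallyIntegrable_const (1 : ℝ)).mono hu.aestronglyMeasurable
      (ae_of_all _ fun y => by simpa using norm_positiveSideCutoff_le_one _ v c s y)
  have hρ : Measurable ρ := (measurable_coverGradient c s).add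
    (measurable_const.indicator isClosed_closedBall.isOpen_compl.measurableSet)
  have hρint : ∫⁻ y in ball x (lP * r), ρ y ∂μ ≤
      D ^ 2 * ∑' i, μ (ball (c i) (s i)) / ENNReal.ofReal (s i) :=
    calc ∫⁻ y in ball x (lP * r), ρ y ∂μ = ∫⁻ y in ball x (lP * r), coverGradient c s y ∂μ :=
          setLIntegral_congr_fun measurableSet_ball fun y hy => by
            have : y ∈ closedBall x (R / 4) := ball_subset_closedBall (ball_subset_ball hlPR hy)
            simp [ρ, this]
      _ ≤ ∫⁻ y, coverGradient c s y ∂μ := setLIntegral_le_lintegral _ _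
      _ ≤ _ := lintegral_coverGradient_le hD c s
  refine (hP.2 u ρ hloc hρ hug x r hr).trans (mul_le_mul' (ofReal_mul_diam_ball_le CP x hr.le)
    ((setLIntegral_div_measure_ball_le hD hD0 hDtop hr ρ).trans ?_))
  calc D ^ (⌈1 / lP⌉₊ + 2) * (∫⁻ y in ball x (lP * r), ρ y ∂μ) / μ (ball x R)
      ≤ D ^ (⌈1 / lP⌉₊ + 2) * (D ^ 2 * ∑' i, μ (ball (c i) (s i)) / ENNReal.ofReal (s i)) /
          μ (ball x R) := by gcongr
    _ = _ := by rw [← mul_assoc, ← pow_add]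

theorem min_measure_sign_div_le_of_cover
    (hD : ∀ (y : T) (s : ℝ), 0 < s → μ (ball y (2 * s)) ≤ D * μ (ball y s))
    (hD0 : D ≠ 0) (hDtop : D ≠ ⊤) (hP : SupportsPoincare μ CP lP) {v : T → ℝ} {x : T}
    {r δ : ℝ} (hr : 0 < r) (hv : ContinuousOn v (ball x (isoDilation lP * r)))
    (hδ : ENNReal.ofReal δ / μ (ball x r) ≤
      ENNReal.ofReal r / μ (ball x (isoDilation lP * r)))
    {c : ℕ → T} {s : ℕ → ℝ} (hs : ∀ i, s i ≤ δ)
    (hcov : {y | v y = 0} ∩ ball x (isoDilation lP * r) ⊆ ⋃ i, ball (c i) (s i)) :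
    min (μ (ball x r ∩ {y | 0 < v y}) / μ (ball x r))
        (μ (ball x r ∩ {y | v y ≤ 0}) / μ (ball x r)) ≤
      isoConst D CP lP * (ENNReal.ofReal r / μ (ball x (isoDilation lP * r))) *
        ∑' i, μ (ball (c i) (s i)) / ENNReal.ofReal (s i) := by
  set R := isoDilation lP * r
  set S := ∑' i, μ (ball (c i) (s i)) / ENNReal.ofReal (s i)
  set u := positiveSideCutoff (ball x R) v c s
  set IB := ∫⁻ y in ball x r, ENNReal.ofReal |u y - ⨍ z in ball x r, u z ∂μ| ∂μ
  have hrR : r ≤ R := le_mul_of_one_le_left hr.le (one_le_isoDilation lP)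
  calc min (μ (ball x r ∩ {y | 0 < v y}) / μ (ball x r))
        (μ (ball x r ∩ {y | v y ≤ 0}) / μ (ball x r))
      = min (μ (ball x r ∩ {y | 0 < v y})) (μ (ball x r ∩ {y | v y ≤ 0})) / μ (ball x r) :=
        (Monotone.map_min fun _ _ h => ENNReal.div_le_div_right h _).symm
    _ ≤ (2 * IB + μ (⋃ i, ball (c i) (2 * s i))) / μ (ball x r) :=
        ENNReal.div_le_div_right (min_measure_sign_le
          (measurable_positiveSideCutoff isOpen_ball hv c s) (ball_subset_ball hrR) _) _
    _ = 2 * (IB / μ (ball x r)) + μ (⋃ i, ball (c i) (2 * s i)) / μ (ball x r) := by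
        rw [ENNReal.add_div, mul_div_assoc]
    _ ≤ 2 * (2 * ENNReal.ofReal CP * ENNReal.ofReal r *
          (D ^ (⌈1 / lP⌉₊ + 4) * S / μ (ball x R))) + D * ENNReal.ofReal δ * S / μ (ball x r) :=
        add_le_add (by gcongr; exact poincare_positiveSideCutoff hD hD0 hDtop hP hr hv hcov)
          (ENNReal.div_le_div_right (measure_iUnion_ball_two_mul_le hD hs) _)
    _ = 4 * ENNReal.ofReal CP * D ^ (⌈1 / lP⌉₊ + 4) * (ENNReal.ofReal r / μ (ball x R)) * S +
        D * (ENNReal.ofReal δ / μ (ball x r)) * S := by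
        simp only [div_eq_mul_inv]; ring
    _ ≤ 4 * ENNReal.ofReal CP * D ^ (⌈1 / lP⌉₊ + 4) * (ENNReal.ofReal r / μ (ball x R)) * S +
        D * (ENNReal.ofReal r / μ (ball x R)) * S := by gcongr
    _ = isoConst D CP lP * (ENNReal.ofReal r / μ (ball x R)) * S := by rw [isoConst]; ring

theorem min_measure_sign_div_le
    (hD : ∀ (y : T) (s : ℝ), 0 < s → μ (ball y (2 * s)) ≤ D * μ (ball y s))
    (hDtop : D ≠ ⊤) (hP : SupportsPoincare μ CP lP) {v : T → ℝ} {x : T} {r : ℝ} (hr : 0 < r)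
    (hv : ContinuousOn v (ball x (isoDilation lP * r))) :
    min (μ (ball x r ∩ {y | 0 < v y}) / μ (ball x r))
        (μ (ball x r ∩ {y | v y ≤ 0}) / μ (ball x r)) ≤
      isoConst D CP lP * (ENNReal.ofReal r / μ (ball x (isoDilation lP * r))) *
        codimH μ ({y | v y = 0} ∩ ball x (isoDilation lP * r)) := by
  set R := isoDilation lP * r
  obtain ⟨hB0, hBtop⟩ := hP.1 x r hr
  obtain ⟨hBR0, hBRtop⟩ := hP.1 x R (mul_pos (one_pos.trans_le (one_le_isoDilation lP)) hr)
  have hD0 : D ≠ 0 := by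
    rintro rfl
    simpa using (hP.1 x (2 * r) (by positivity)).1.trans_le (hD x r hr)
  have hr' : ENNReal.ofReal r ≠ 0 := (ENNReal.ofReal_pos.2 hr).ne'
  obtain ⟨δ, -, hδ0, hδ⟩ := ENNReal.lt_iff_exists_real_btwn.1
    (ENNReal.div_pos (mul_ne_zero hr' hB0.ne') hBRtop.ne)
  have hδ' : ENNReal.ofReal δ / μ (ball x r) ≤ ENNReal.ofReal r / μ (ball x R) := by
    rw [ENNReal.div_le_iff_le_mul (Or.inl hB0.ne') (Or.inl hBtop.ne), ENNReal.mul_comm_div,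
      ← mul_div_assoc]
    exact hδ.le
  set K := isoConst D CP lP * (ENNReal.ofReal r / μ (ball x R))
  have hK0 : K ≠ 0 :=
    mul_ne_zero (isoConst_pos hD0 CP lP).ne' (ENNReal.div_pos hr' hBRtop.ne).ne'
  have hKtop : K ≠ ⊤ :=
    ENNReal.mul_ne_top (isoConst_lt_top hDtop CP lP).ne
      (ENNReal.div_ne_top ENNReal.ofReal_ne_top hBR0.ne')
  rw [mul_comm K, ← ENNReal.div_le_iff_le_mul (Or.inl hK0) (Or.inl hKtop)]
  exact le_codimH_of_forall_cover (ENNReal.ofReal_pos.1 hδ0) fun c s hs hcov =>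
    ENNReal.div_le_of_le_mul' (min_measure_sign_div_le_of_cover hD hD0 hDtop hP hr hv hδ' hs hcov)

end Isoperimetric

lemma exists_continuousOn_comp_eq {E X Y : Type*} [TopologicalSpace E] [TopologicalSpace X]
    [TopologicalSpace Y] [Nonempty Y] {π : E → X} (hπ : IsOpenMap π) {f : E → Y}
    (hf : Continuous f) {W : Set E} (hW : IsOpen W)
    (hfib : ∀ z ∈ W, ∀ z' ∈ W, π z = π z' → f z = f z') :
    ∃ v : X → Y, ContinuousOn v (π '' W) ∧ ∀ z ∈ W, v (π z) = f z := by
  classical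
  let v : X → Y := fun y => if h : y ∈ π '' W then f h.choose else Classical.arbitrary Y
  have hv : ∀ z ∈ W, v (π z) = f z := fun z hz => by
    have h : π z ∈ π '' W := mem_image_of_mem π hz
    simp only [v, dif_pos h]
    exact hfib _ h.choose_spec.1 z hz h.choose_spec.2
  refine ⟨v, (continuousOn_open_iff (hπ W hW)).2 fun O hO => ?_, hv⟩
  -- since `π` is open, the preimage of `O` under `v` is the open set `π '' (W ∩ f ⁻¹' O)`
  convert hπ _ (hW.inter (hO.preimage hf)) using 1
  ext y
  constructor
  · rintro ⟨⟨z, hz, rfl⟩, hO'⟩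
    exact ⟨z, ⟨hz, by rwa [mem_preimage, ← hv z hz]⟩, rfl⟩
  · rintro ⟨z, ⟨hz, hfz⟩, rfl⟩
    exact ⟨mem_image_of_mem π hz, by rwa [mem_preimage, hv z hz]⟩

end Duality

open Duality in
/-- **Lemma 4.6 (relative isoperimetric inequality).** -/
theorem statement12 (Cμ : ℝ≥0∞) (CP lP : ℝ) :
    ∃ (C : ℝ≥0∞) (lam : ℝ), 0 < C ∧ C < ⊤ ∧ 1 ≤ lam ∧
      ∀ (T : Type) [MetricSpace T] [MeasurableSpace T] [BorelSpace T] [CompactSpace T]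
        (Tt : Type) [MetricSpace Tt]
        (μ : Measure T) (x₀ : T) (α₀ : Path x₀ x₀) (π : Tt → T) (τ : Tt → Tt),
        Standing μ Cμ CP lP x₀ α₀ → CoverSetup π → IsDeck π x₀ α₀ τ →
        ∀ (φ : T → UnitAddCircle) (k : ℤ) (φt : Tt → ℝ),
          0 < k → HasDegree x₀ α₀ φ k → Continuous φt →
          (∀ x, ((φt x : ℝ) : UnitAddCircle) = φ (π x)) →
          (∃ xt₀ : Tt, φt xt₀ = 0) →
          ∀ (x : T) (r : ℝ), 0 < r →
            ball x (lam * r) ⊆ π '' (φt ⁻¹' Set.Ioo (-(1/4) : ℝ) (1/4)) →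
            min (μ (ball x r ∩ π '' (φt ⁻¹' Set.Ioo (0 : ℝ) (1/4))) / μ (ball x r))
                (μ (ball x r ∩ π '' (φt ⁻¹' Set.Ioc (-(1/4) : ℝ) 0)) / μ (ball x r)) ≤
              C * (ENNReal.ofReal r / μ (ball x (lam * r))) *
                codimH μ (π '' (φt ⁻¹' ({0} : Set ℝ)) ∩ ball x (lam * r)) := by
  have hD : (Cμ.toNNReal + 1 : ℝ≥0∞) ≠ ⊤ := by simp
  refine ⟨isoConst (Cμ.toNNReal + 1) CP lP, isoDilation lP, isoConst_pos (by simp) CP lP,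
    isoConst_lt_top hD CP lP, one_le_isoDilation lP, ?_⟩
  intro T _ _ _ _ Tt _ μ x₀ α₀ π τ hSt hCov _ φ k φt _ _ hφt hlift _ x r hr hball
  -- two lifts over the same point with values in `(-1/4, 1/4)` differ by an integer, so agree
  obtain ⟨v, hv, hvπ⟩ := exists_continuousOn_comp_eq hCov.1.isLocalHomeomorph.isOpenMap hφt
    (isOpen_Ioo.preimage hφt) fun z hz z' hz' hzz' => by
      have hIco : ∀ w ∈ φt ⁻¹' Ioo (-(1/4) : ℝ) (1/4), φt w ∈ Ico (-(1/4) : ℝ) (-(1/4) + 1) :=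
        fun w hw => ⟨hw.1.le, by linarith [hw.2]⟩
      exact (AddCircle.coe_eq_coe_iff_of_mem_Ico (hIco z hz) (hIco z' hz')).1
        (by rw [hlift, hlift, hzz'])
  refine le_trans ?_ ((min_measure_sign_div_le (fun y _ hs => hSt.1.measure_ball_two_mul_le y hs)
    hD hSt.2.1 hr (hv.mono hball)).trans ?_)
  · gcongr
    · rintro _ ⟨z, hz, rfl⟩
      exact show 0 < v (π z) by rw [hvπ z ⟨by linarith [hz.1], hz.2⟩]; exact hz.1
    · rintro _ ⟨z, hz, rfl⟩
      exact show v (π z) ≤ 0 by rw [hvπ z ⟨hz.1, by linarith [hz.2]⟩]; exact hz.2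
  · gcongr
    refine codimH_mono μ fun y ⟨hy0, hy⟩ => ⟨?_, hy⟩
    obtain ⟨z, hz, rfl⟩ := hball hy
    exact ⟨z, (hvπ z hz).symm.trans hy0, rfl⟩
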